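/- Assume that E ⊥ Tⁿ E and E ⊥ T'ⁿ E for every integer n ≥ 1 (i.e. ⟨e, Tⁿ e'⟩ = 0 = ⟨e, T'ⁿ e'⟩ for all e, e' ∈ E and n ≥ 1). Let (e_m)_{m∈ℕ} be a sequence in E with Σ_{m≥0} ‖Tᵐ e_m‖ < ∞ and put x := Σ_{m≥0} Tᵐ e_m. Then Σ_{n≥0} ‖Tⁿ P_E T'*ⁿ x‖ < ∞ and Σ_{n≥0} Tⁿ P_E T'*ⁿ x = x, while T'*ⁿ P_E Tⁿ x = 0 for every n ≥ 1. -/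

import Mathlib

open ContinuousLinearMap

/-- Orthogonal projection onto the closed subspace `E`, as an operator `H →L[ℂ] H`. -/
noncomputable def PE {H : Type*} [NormedAddCommGroup H] [InnerProductSpace ℂ H]
    (E : Submodule ℂ H) [CompleteSpace E] : H →L[ℂ] H :=
  E.subtypeL.comp (Submodule.orthogonalProjectionOnto E)

/-!
Since `T'* T = 1`, the operator `T'*ⁿ` sends `Tᵐ e` to `T^(m-n) e` or to `T'*^(n-m) e`, and for
`e ∈ E` both lie in `Eᗮ` unless `m = n`. Projecting `T'*ⁿ x = ∑ T'*ⁿ Tᵐ eₘ` onto `E` therefore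
picks out the single term `eₙ`, and projecting `Tⁿ x = ∑ T^(n+m) eₘ` onto `E` gives `0`.
-/

section Monoid

variable {M : Type*} [Monoid M] {a b : M}

lemma pow_mul_pow_of_le (hab : a * b = 1) {m n : ℕ} (h : m ≤ n) :
    a ^ n * b ^ m = a ^ (n - m) := by
  rw [← Nat.sub_add_cancel h, pow_add, Nat.add_sub_cancel, mul_assoc,
    pow_mul_pow_eq_one m hab, mul_one]

lemma pow_mul_pow_of_ge (hab : a * b = 1) {m n : ℕ} (h : n ≤ m) :
    a ^ n * b ^ m = b ^ (m - n) := by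
  rw [← Nat.add_sub_cancel' h, pow_add, Nat.add_sub_cancel_left, ← mul_assoc,
    pow_mul_pow_eq_one n hab, one_mul]

end Monoid

section Adjoint

variable {𝕜 H K : Type*} [RCLike 𝕜] [NormedAddCommGroup H] [InnerProductSpace 𝕜 H]
  [CompleteSpace H] [NormedAddCommGroup K] [InnerProductSpace 𝕜 K] [CompleteSpace K]

lemma adjoint_comp_comp_eq_id {T : H →L[𝕜] K} {W : H →L[𝕜] H}
    (hW : (adjoint T ∘L T) ∘L W = ContinuousLinearMap.id 𝕜 H) :
    adjoint (T ∘L W) ∘L T = ContinuousLinearMap.id 𝕜 H := by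
  simpa only [adjoint_comp, adjoint_adjoint, adjoint_id, comp_assoc] using congr_arg adjoint hW

lemma adjoint_apply_mem_orthogonal {S : H →L[𝕜] H} {E : Submodule 𝕜 H}
    (hS : ∀ e ∈ E, ∀ e' ∈ E, inner 𝕜 e (S e') = 0) {y : H} (hy : y ∈ E) :
    adjoint S y ∈ Eᗮ := fun u hu => by
  rw [adjoint_inner_right, ← inner_conj_symm, hS y hy u hu, map_zero]

end Adjoint

section Wandering

variable {𝕜 H : Type*} [RCLike 𝕜] [NormedAddCommGroup H] [InnerProductSpace 𝕜 H]
  {A T : H →L[𝕜] H} {E : Submodule 𝕜 H} [E.HasOrthogonalProjection]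

lemma starProjection_pow_apply_pow (hAT : A * T = 1)
    (hT : ∀ k, 1 ≤ k → ∀ y ∈ E, (T ^ k) y ∈ Eᗮ) (hA : ∀ k, 1 ≤ k → ∀ y ∈ E, (A ^ k) y ∈ Eᗮ)
    {y : H} (hy : y ∈ E) (m n : ℕ) :
    E.starProjection ((A ^ n) ((T ^ m) y)) = if m = n then y else 0 := by
  rw [← mul_apply_eq_comp (A ^ n)]
  rcases lt_trichotomy m n with hmn | rfl | hnm
  · rw [pow_mul_pow_of_le hAT hmn.le, if_neg hmn.ne, Submodule.starProjection_apply_eq_zero_iff]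
    exact hA _ (by omega) y hy
  · rw [pow_mul_pow_eq_one m hAT, one_apply_eq_self, if_pos rfl]
    exact Submodule.starProjection_eq_self_iff.2 hy
  · rw [pow_mul_pow_of_ge hAT hnm.le, if_neg hnm.ne', Submodule.starProjection_apply_eq_zero_iff]
    exact hT _ (by omega) y hy

variable {e : ℕ → H} {x : H}

lemma starProjection_pow_apply_eq_of_hasSum (hAT : A * T = 1)
    (hT : ∀ k, 1 ≤ k → ∀ y ∈ E, (T ^ k) y ∈ Eᗮ) (hA : ∀ k, 1 ≤ k → ∀ y ∈ E, (A ^ k) y ∈ Eᗮ)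
    (he : ∀ m, e m ∈ E) (hx : HasSum (fun m => (T ^ m) (e m)) x) (n : ℕ) :
    E.starProjection ((A ^ n) x) = e n := by
  have h := (E.starProjection ∘L (A ^ n)).hasSum hx
  simp only [comp_apply, starProjection_pow_apply_pow hAT hT hA (he _)] at h
  simpa using h.unique (hasSum_single n fun m hm => if_neg hm)

lemma starProjection_pow_apply_eq_zero_of_hasSum (hT : ∀ k, 1 ≤ k → ∀ y ∈ E, (T ^ k) y ∈ Eᗮ)
    (he : ∀ m, e m ∈ E) (hx : HasSum (fun m => (T ^ m) (e m)) x) {n : ℕ} (hn : 1 ≤ n) :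
    E.starProjection ((T ^ n) x) = 0 := by
  have hterm (m : ℕ) : E.starProjection ((T ^ n) ((T ^ m) (e m))) = 0 := by
    rw [← mul_apply_eq_comp (T ^ n), ← pow_add, Submodule.starProjection_apply_eq_zero_iff]
    exact hT _ (by omega) _ (he m)
  have h := (E.starProjection ∘L (T ^ n)).hasSum hx
  simp only [comp_apply, hterm] at h
  exact h.unique hasSum_zero

end Wandering

theorem stmt_17_general {H : Type*} [NormedAddCommGroup H] [InnerProductSpace ℂ H] [CompleteSpace H]
    (T T' W : H →L[ℂ] H)
    (hW2 : ((ContinuousLinearMap.adjoint T).comp T).comp W = ContinuousLinearMap.id ℂ H)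
    (hT' : T' = T.comp W)
    (E : Submodule ℂ H) [CompleteSpace E]
    (horth : ∀ n : ℕ, 1 ≤ n → ∀ e ∈ E, ∀ e' ∈ E,
      (inner ℂ e ((T ^ n) e') : ℂ) = 0 ∧ (inner ℂ e ((T' ^ n) e') : ℂ) = 0)
    (e : ℕ → H) (he : ∀ m : ℕ, e m ∈ E)
    (hsum : Summable (fun m : ℕ => ‖(T ^ m) (e m)‖))
    (x : H) (hx : HasSum (fun m : ℕ => (T ^ m) (e m)) x) :
    Summable (fun n : ℕ =>
      ‖(T ^ n) (PE E (((ContinuousLinearMap.adjoint T') ^ n) x))‖) ∧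
    (∑' n : ℕ, (T ^ n) (PE E (((ContinuousLinearMap.adjoint T') ^ n) x))) = x ∧
    (∀ n : ℕ, 1 ≤ n →
      ((ContinuousLinearMap.adjoint T') ^ n) (PE E ((T ^ n) x)) = 0) := by
  have hAT : adjoint T' * T = 1 := hT' ▸ adjoint_comp_comp_eq_id hW2
  have hT (k : ℕ) (hk : 1 ≤ k) (y : H) (hy : y ∈ E) : (T ^ k) y ∈ Eᗮ :=
    fun u hu => (horth k hk u hu y hy).1
  have hA (k : ℕ) (hk : 1 ≤ k) (y : H) (hy : y ∈ E) : (adjoint T' ^ k) y ∈ Eᗮ := by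
    rw [← star_eq_adjoint, ← star_pow, star_eq_adjoint]
    exact adjoint_apply_mem_orthogonal (fun u hu v hv => (horth k hk u hu v hv).2) hy
  have hP (n : ℕ) : PE E ((adjoint T' ^ n) x) = e n :=
    starProjection_pow_apply_eq_of_hasSum hAT hT hA he hx n
  refine ⟨by simpa only [hP] using hsum, by simpa only [hP] using hx.tsum_eq, fun n hn => ?_⟩
  have h0 : PE E ((T ^ n) x) = 0 := starProjection_pow_apply_eq_zero_of_hasSum hT he hx hn
  rw [h0, map_zero]

theorem stmt_17 {H : Type*} [NormedAddCommGroup H] [InnerProductSpace ℂ H] [CompleteSpace H]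
    (T T' W : H →L[ℂ] H)
    (hleft : ∃ S : H →L[ℂ] H, S.comp T = ContinuousLinearMap.id ℂ H)
    (hW1 : W.comp ((ContinuousLinearMap.adjoint T).comp T) = ContinuousLinearMap.id ℂ H)
    (hW2 : ((ContinuousLinearMap.adjoint T).comp T).comp W = ContinuousLinearMap.id ℂ H)
    (hT' : T' = T.comp W)
    (E : Submodule ℂ H) [CompleteSpace E]
    (horth : ∀ n : ℕ, 1 ≤ n → ∀ e ∈ E, ∀ e' ∈ E,
      (inner ℂ e ((T ^ n) e') : ℂ) = 0 ∧ (inner ℂ e ((T' ^ n) e') : ℂ) = 0)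
    (e : ℕ → H) (he : ∀ m : ℕ, e m ∈ E)
    (hsum : Summable (fun m : ℕ => ‖(T ^ m) (e m)‖))
    (x : H) (hx : HasSum (fun m : ℕ => (T ^ m) (e m)) x) :
    Summable (fun n : ℕ =>
      ‖(T ^ n) (PE E (((ContinuousLinearMap.adjoint T') ^ n) x))‖) ∧
    (∑' n : ℕ, (T ^ n) (PE E (((ContinuousLinearMap.adjoint T') ^ n) x))) = x ∧
    (∀ n : ℕ, 1 ≤ n →
      ((ContinuousLinearMap.adjoint T') ^ n) (PE E ((T ^ n) x)) = 0) :=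
  stmt_17_general T T' W hW2 hT' E horth e he hsum x hx
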